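/- arXiv:0707.1231 — 7 statements merged into one kernel-verified Lean document; each statement's English description precedes it below -/
import Mathlib

section
/- Let n, N ≥ 1, let λ_1,…,λ_n > 0 with Σ_k λ_k = 1, let ρ := diag(λ_1,…,λ_n), let A_1,…,A_N be Hermitian n×n complex matrices, and let m : (0,∞)×(0,∞) → ℝ satisfy 0 < m(x,y) ≤ (x+y)/2 for all x,y > 0. Then det G(m) ≤ det Cov, i.e. the generalized covariance determinant det{Cov_ρ(A_h,A_j)} dominates the determinant of the quantum-Fisher-information Gram matrix det{(f(0)/2)⟨i[ρ,A_h], i[ρ,A_j]⟩_{ρ,f}}. -/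
/-!
Write `X_h := (A_h)₀` and `Re⟨X_h, X_j⟩_w := Σ_{k,l} w_{kl} Re(X_h(k,l) conj X_j(k,l))`. Since the
`X_h` are Hermitian, `Cov` is this weighted Gram matrix for the weights `(λ_k + λ_l)/2`, so both
`G(m)` (weights `(λ_k + λ_l)/2 - m(λ_k, λ_l)`) and `Cov - G(m)` (weights `m(λ_k, λ_l)`) are Gram
matrices with nonnegative weights, hence positive semidefinite. Finally the determinant is
monotone on positive semidefinite matrices: if `0 ≤ G ≤ C` and `G = S²` is invertible, then
`C = S (1 + M) S` with `M ≥ 0`, and `det (1 + M) ≥ 1`.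
-/

open Matrix

namespace Matrix

variable {ι : Type*} [Fintype ι]

lemma PosSemidef.one_le_det_one_add [DecidableEq ι] {M : Matrix ι ι ℝ} (hM : M.PosSemidef) :
    1 ≤ (1 + M).det := by
  set U : Matrix ι ι ℝ := (hM.1.eigenvectorUnitary : Matrix ι ι ℝ)
  have hU : U * star U = 1 := mem_unitaryGroup_iff.mp hM.1.eigenvectorUnitary.2
  have hconj : 1 + M = U * diagonal (fun i => 1 + hM.1.eigenvalues i) * star U := by
    have hspec := hM.1.spectral_theorem
    rw [Unitary.conjStarAlgAut_apply] at hspec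
    have hdiag : diagonal (fun i => 1 + hM.1.eigenvalues i) =
        1 + diagonal (RCLike.ofReal ∘ hM.1.eigenvalues) := by
      rw [← diagonal_one, diagonal_add]; rfl
    rw [hdiag, mul_add, add_mul, mul_one, hU, ← hspec]
  rw [hconj, det_mul_right_comm, hU, one_mul, det_diagonal]
  exact Finset.one_le_prod fun i _ => by linarith [hM.eigenvalues_nonneg i]

open scoped MatrixOrder in
lemma PosSemidef.det_le_det [DecidableEq ι] {A B : Matrix ι ι ℝ} (hA : A.PosSemidef)
    (hBA : (B - A).PosSemidef) : A.det ≤ B.det := by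
  by_cases hdet : A.det = 0
  · rw [hdet]
    simpa using (hA.add hBA).det_nonneg
  set S := CFC.sqrt A
  have hSS : S * S = A := CFC.sqrt_mul_sqrt_self A hA.nonneg
  have hS : IsUnit S.det :=
    isUnit_iff_ne_zero.2 fun h => hdet (by rw [← hSS, det_mul, h, zero_mul])
  set M := S⁻¹ * (B - A) * S⁻¹
  have hM : M.PosSemidef := by
    have hSinv : S⁻¹ᴴ = S⁻¹ := (CFC.sqrt_nonneg A).posSemidef.1.inv.eq
    simpa only [hSinv] using hBA.mul_mul_conjTranspose_same S⁻¹
  have hB : B = S * (1 + M) * S := by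
    rw [mul_add, mul_one, add_mul, hSS]
    simp only [M, ← Matrix.mul_assoc, mul_nonsing_inv _ hS, one_mul]
    rw [Matrix.mul_assoc, nonsing_inv_mul _ hS, mul_one, add_sub_cancel]
  calc A.det = A.det * 1 := (mul_one _).symm
    _ ≤ A.det * (1 + M).det := mul_le_mul_of_nonneg_left hM.one_le_det_one_add hA.det_nonneg
    _ = B.det := by rw [hB, det_mul, det_mul, ← hSS, det_mul]; ring

lemma IsHermitian.isSelfAdjoint_trace_mul {R : Type*} [CommSemiring R] [StarRing R]
    {A B : Matrix ι ι R} (hA : A.IsHermitian) (hB : B.IsHermitian) :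
    IsSelfAdjoint (A * B).trace := by
  rw [IsSelfAdjoint, ← trace_conjTranspose, conjTranspose_mul, hA.eq, hB.eq, trace_mul_comm]

end Matrix

section WeightedGram

variable {ι κ : Type*} [Fintype κ]

def weightedGram (w : κ → κ → ℝ) (X : ι → Matrix κ κ ℂ) : Matrix ι ι ℝ :=
  of fun h j => ∑ k, ∑ l, w k l * (X h k l * starRingEnd ℂ (X j k l)).re

lemma weightedGram_sub (w₁ w₂ : κ → κ → ℝ) (X : ι → Matrix κ κ ℂ) :
    weightedGram (w₁ - w₂) X = weightedGram w₁ X - weightedGram w₂ X := by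
  ext h j
  simp only [weightedGram, of_apply, Matrix.sub_apply, Pi.sub_apply, sub_mul,
    Finset.sum_sub_distrib]

lemma posSemidef_map_re_vecMulVec_self_star [Finite ι] (v : ι → ℂ) :
    ((vecMulVec v (star v)).map Complex.re).PosSemidef := by
  have hsplit : (vecMulVec v (star v)).map Complex.re =
      vecMulVec (fun h => (v h).re) (star fun h => (v h).re) +
        vecMulVec (fun h => (v h).im) (star fun h => (v h).im) := by
    ext h j
    simp [vecMulVec_apply]
  rw [hsplit]
  exact (posSemidef_vecMulVec_self_star _).add (posSemidef_vecMulVec_self_star _)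

lemma posSemidef_weightedGram [Finite ι] {w : κ → κ → ℝ} (hw : ∀ k l, 0 ≤ w k l)
    (X : ι → Matrix κ κ ℂ) :
    (weightedGram w X).PosSemidef := by
  have hsum : weightedGram w X =
      ∑ k, ∑ l, w k l • (vecMulVec (fun h => X h k l) (star fun h => X h k l)).map Complex.re := by
    ext h j
    simp [weightedGram, Matrix.sum_apply, vecMulVec_apply]
  rw [hsum]
  exact posSemidef_sum _ fun k _ => posSemidef_sum _ fun l _ =>
    (posSemidef_map_re_vecMulVec_self_star fun h => X h k l).smul (hw k l)

lemma re_trace_diagonal_mul_mul [DecidableEq κ] (d : κ → ℝ) {X Y : Matrix κ κ ℂ}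
    (hX : X.IsHermitian) (hY : Y.IsHermitian) :
    (trace (diagonal (fun k => (d k : ℂ)) * X * Y)).re =
      ∑ k, ∑ l, (d k + d l) / 2 * (X k l * starRingEnd ℂ (Y k l)).re := by
  set r : κ → κ → ℝ := fun k l => (X k l * starRingEnd ℂ (Y k l)).re
  have hr : ∀ k l, r l k = r k l := fun k l => by
    simp only [r]
    rw [← hX.apply l k, ← hY.apply l k]
    simp [Complex.mul_re]
  have htrace : (trace (diagonal (fun k => (d k : ℂ)) * X * Y)).re = ∑ k, ∑ l, d k * r k l := by
    simp only [Matrix.mul_assoc, trace, diag, diagonal_mul]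
    simp only [mul_apply, Finset.mul_sum, Complex.re_sum]
    refine Finset.sum_congr rfl fun k _ => Finset.sum_congr rfl fun l _ => ?_
    rw [← hY.apply l k, Complex.re_ofReal_mul]
    rfl
  have hswap : ∑ k, ∑ l, d l * r k l = ∑ k, ∑ l, d k * r k l := by
    rw [Finset.sum_comm]
    simp only [hr]
  rw [htrace, ← add_halves (∑ k, ∑ l, d k * r k l)]
  nth_rewrite 2 [← hswap]
  simp only [Finset.sum_div, ← Finset.sum_add_distrib]
  exact Finset.sum_congr rfl fun k _ => Finset.sum_congr rfl fun l _ => by ring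

end WeightedGram

theorem det_fisher_le_det_cov_general
    (n N : ℕ)
    (lam : Fin n → ℝ) (hpos : ∀ k, 0 < lam k)
    (A : Fin N → Matrix (Fin n) (Fin n) ℂ) (hA : ∀ h, (A h).IsHermitian)
    (m : ℝ → ℝ → ℝ)
    (hm : ∀ x y : ℝ, 0 < x → 0 < y → 0 < m x y ∧ m x y ≤ (x + y) / 2)
    (ρ : Matrix (Fin n) (Fin n) ℂ)
    (hρ : ρ = Matrix.diagonal fun k => (lam k : ℂ))
    (A₀ : Fin N → Matrix (Fin n) (Fin n) ℂ)
    (hA₀ : ∀ h, A₀ h = A h - (Matrix.trace (ρ * A h)) • (1 : Matrix (Fin n) (Fin n) ℂ))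
    (Cov : Matrix (Fin N) (Fin N) ℝ)
    (hCov : ∀ h j, Cov h j = (Matrix.trace (ρ * A₀ h * A₀ j)).re)
    (G : Matrix (Fin N) (Fin N) ℝ)
    (hG : ∀ h j, G h j = Cov h j -
      ∑ k, ∑ l, m (lam k) (lam l) * (A₀ h k l * (starRingEnd ℂ) (A₀ j k l)).re) :
    G.det ≤ Cov.det := by
  have hρherm : ρ.IsHermitian :=
    hρ ▸ isHermitian_diagonal_of_self_adjoint _ (funext fun k => Complex.conj_ofReal (lam k))
  have hA₀herm : ∀ h, (A₀ h).IsHermitian := fun h => hA₀ h ▸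
    (hA h).sub (isHermitian_one.smul (hρherm.isSelfAdjoint_trace_mul (hA h)))
  have hCov_gram : Cov = weightedGram (fun k l => (lam k + lam l) / 2) A₀ := by
    ext h j
    rw [hCov, hρ, re_trace_diagonal_mul_mul lam (hA₀herm h) (hA₀herm j)]
    rfl
  have hG_gram : G = Cov - weightedGram (fun k l => m (lam k) (lam l)) A₀ := by
    ext h j
    exact hG h j
  have hmean : ∀ k l, 0 < m (lam k) (lam l) ∧ m (lam k) (lam l) ≤ (lam k + lam l) / 2 :=
    fun k l => hm _ _ (hpos k) (hpos l)
  refine PosSemidef.det_le_det ?_ ?_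
  · rw [hG_gram, hCov_gram, ← weightedGram_sub]
    exact posSemidef_weightedGram (fun k l => sub_nonneg.2 (hmean k l).2) A₀
  · rw [hG_gram, sub_sub_cancel]
    exact posSemidef_weightedGram (fun k l => (hmean k l).1.le) A₀

/-- For a faithful diagonal density matrix ρ = diag(λ), Hermitian matrices
`A_1, …, A_N`, and any mean-like function `m` with `0 < m(x,y) ≤ (x+y)/2` on positives,
the determinant of the quantum-Fisher-information Gram matrix `G(m)` is dominated by the
determinant of the covariance matrix. -/
theorem det_fisher_le_det_cov
    (n N : ℕ) (hn : 1 ≤ n) (hN : 1 ≤ N)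
    (lam : Fin n → ℝ) (hpos : ∀ k, 0 < lam k) (hsum : ∑ k, lam k = 1)
    (A : Fin N → Matrix (Fin n) (Fin n) ℂ) (hA : ∀ h, (A h).IsHermitian)
    (m : ℝ → ℝ → ℝ)
    (hm : ∀ x y : ℝ, 0 < x → 0 < y → 0 < m x y ∧ m x y ≤ (x + y) / 2)
    (ρ : Matrix (Fin n) (Fin n) ℂ)
    (hρ : ρ = Matrix.diagonal fun k => (lam k : ℂ))
    (A₀ : Fin N → Matrix (Fin n) (Fin n) ℂ)
    (hA₀ : ∀ h, A₀ h = A h - (Matrix.trace (ρ * A h)) • (1 : Matrix (Fin n) (Fin n) ℂ))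
    (Cov : Matrix (Fin N) (Fin N) ℝ)
    (hCov : ∀ h j, Cov h j = (Matrix.trace (ρ * A₀ h * A₀ j)).re)
    (G : Matrix (Fin N) (Fin N) ℝ)
    (hG : ∀ h j, G h j = Cov h j -
      ∑ k, ∑ l, m (lam k) (lam l) * (A₀ h k l * (starRingEnd ℂ) (A₀ j k l)).re) :
    G.det ≤ Cov.det :=
  det_fisher_le_det_cov_general n N lam hpos A hA m hm ρ hρ A₀ hA₀ Cov hCov G hG
end

section
/- Let n, N ≥ 1 and let ρ := diag(1,0,…,0) be the diagonal rank-one projection (a pure state), i.e. λ_1 = 1 and λ_k = 0 for k ≥ 2. Let A_1,…,A_N be Hermitian n×n complex matrices and let m : [0,∞)×[0,∞) → ℝ satisfy m(x,0) = m(0,x) = 0 for all x ≥ 0. Then Σ_{k,l=1}^n m(λ_k,λ_l)·Re( ((A_h)₀)_{kl} · conj(((A_j)₀)_{kl}) ) = 0 for all h,j, so G(m)_{hj} = Cov_{hj} for all h,j; in particular det G(m) = det Cov (on pure states the uncertainty-principle inequality is an equality). -/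
open Matrix

/-- On the pure state `ρ = diag(1,0,…,0)`, for any `m` vanishing when one of
its arguments is `0`, the correction term vanishes entrywise, so `G(m) = Cov` and in
particular `det G(m) = det Cov` (on pure states the uncertainty principle is an equality). -/
theorem pure_state_equality
    (n N : ℕ) (hn : 1 ≤ n) (hN : 1 ≤ N)
    (lam : Fin n → ℝ) (hlam : lam = fun k : Fin n => if (k : ℕ) = 0 then (1 : ℝ) else 0)
    (A : Fin N → Matrix (Fin n) (Fin n) ℂ) (hA : ∀ h, (A h).IsHermitian)
    (m : ℝ → ℝ → ℝ)
    (hm : ∀ x : ℝ, 0 ≤ x → m x 0 = 0 ∧ m 0 x = 0)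
    (ρ : Matrix (Fin n) (Fin n) ℂ)
    (hρ : ρ = Matrix.diagonal fun k => (lam k : ℂ))
    (A₀ : Fin N → Matrix (Fin n) (Fin n) ℂ)
    (hA₀ : ∀ h, A₀ h = A h - (Matrix.trace (ρ * A h)) • (1 : Matrix (Fin n) (Fin n) ℂ))
    (Cov : Matrix (Fin N) (Fin N) ℝ)
    (hCov : ∀ h j, Cov h j = (Matrix.trace (ρ * A₀ h * A₀ j)).re)
    (G : Matrix (Fin N) (Fin N) ℝ)
    (hG : ∀ h j, G h j = Cov h j -
      ∑ k, ∑ l, m (lam k) (lam l) * (A₀ h k l * (starRingEnd ℂ) (A₀ j k l)).re) :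
    (∀ h j, ∑ k, ∑ l, m (lam k) (lam l) * (A₀ h k l * (starRingEnd ℂ) (A₀ j k l)).re = 0)
      ∧ G = Cov ∧ G.det = Cov.det := by
  -- basic facts
  have hlam_nonneg : ∀ k, 0 ≤ lam k := by
    intro k; rw [hlam]; dsimp; split <;> norm_num
  have hsum : ∀ h j, ∑ k, ∑ l, m (lam k) (lam l) *
      (A₀ h k l * (starRingEnd ℂ) (A₀ j k l)).re = 0 := by
    intro h j
    apply Finset.sum_eq_zero
    intro k _
    apply Finset.sum_eq_zero
    intro l _
    by_cases hk : (k : ℕ) = 0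
    · by_cases hl : (l : ℕ) = 0
      · -- both zero: A₀ h k l = 0
        have hk0 : k = ⟨0, hn⟩ := Fin.ext hk
        have hl0 : l = ⟨0, hn⟩ := Fin.ext hl
        subst hk0; subst hl0
        have htr : ∀ h', Matrix.trace (ρ * A h') = A h' ⟨0, hn⟩ ⟨0, hn⟩ := by
          intro h'
          rw [hρ, hlam]
          simp only [Matrix.trace, Matrix.diag, Matrix.mul_apply,
            Matrix.diagonal_apply, ite_mul, zero_mul, Finset.sum_ite_eq,
            Finset.mem_univ, if_true]
          rw [Finset.sum_eq_single (⟨0, hn⟩ : Fin n)]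
          · simp
          · intro b _ hb
            have : (b : ℕ) ≠ 0 := fun hc => hb (Fin.ext hc)
            simp [this]
          · simp
        have hz : A₀ h ⟨0, hn⟩ ⟨0, hn⟩ = 0 := by
          rw [hA₀ h]
          simp [Matrix.sub_apply, Matrix.smul_apply, Matrix.one_apply, htr h]
        rw [hz]; simp
      · have : lam l = 0 := by rw [hlam]; simp [hl]
        rw [this, (hm (lam k) (hlam_nonneg k)).1]; ring
    · have : lam k = 0 := by rw [hlam]; simp [hk]
      rw [this, (hm (lam l) (hlam_nonneg l)).2]; ring
  refine ⟨hsum, ?_, ?_⟩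
  · ext h j
    rw [hG h j, hsum h j]; ring
  · have : G = Cov := by ext h j; rw [hG h j, hsum h j]; ring
    rw [this]
end

section
/- Let n ≥ 2 and 1 ≤ N ≤ n(n−1)/2, and let m : (0,∞)×(0,∞) → ℝ satisfy 0 < m(x,y) < (x+y)/2 whenever x ≠ y (x,y > 0). Then there exist pairwise distinct λ_1,…,λ_n > 0 with Σ_k λ_k = 1, ρ := diag(λ_1,…,λ_n), and Hermitian n×n complex matrices A_1,…,A_N such that Tr(ρ·(A_h A_j − A_j A_h)) = 0 for all h,j (so the Robertson matrix {−(i/2)Tr(ρ[A_h,A_j])} is the zero matrix and its determinant is 0) while det G(m) > 0. In other words, the inequality det{(f(0)/2)⟨i[ρ,A_h],i[ρ,A_j]⟩_{ρ,f}} ≤ det{−(i/2)Tr(ρ[A_h,A_j])} is in general false. -/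
/-!
Take `λ_k ∝ k + 1` and, for `N` distinct pairs `a ≠ b`, the real symmetric matrices
`A = E_ab + E_ba`. They have zero diagonal, so `Tr(ρA) = 0` and `A₀ = A`; and since `ρ` is
diagonal and the `A`'s are real symmetric, `Tr(ρAB) = Tr((ρAB)ᵀ) = Tr(ρBA)`, so every
commutator has zero expectation. Distinct pairs have disjoint supports, so `G(m)` is diagonal
with entries `λ_a + λ_b - m(λ_a, λ_b) - m(λ_b, λ_a) > 0`.
-/

open Matrix

variable {ι : Type*}

theorem exists_embedding_fin_offDiag_sym2 {n N : ℕ} (hN : N ≤ n * (n - 1) / 2) :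
    Nonempty (Fin N ↪ {z : Sym2 (Fin n) // ¬z.IsDiag}) :=
  Function.Embedding.nonempty_of_card_le <| by
    rwa [Sym2.card_subtype_not_diag, Fintype.card_fin, Fintype.card_fin, Nat.choose_two_right]

section Normalize

variable [Fintype ι] [Nonempty ι] {v : ι → ℝ} (hv : ∀ k, 0 < v k)
include hv

theorem sum_pos_of_forall_pos : 0 < ∑ i, v i :=
  Finset.sum_pos (fun k _ => hv k) Finset.univ_nonempty

theorem sum_div_sum_self_eq_one : ∑ k, v k / ∑ i, v i = 1 := by
  rw [← Finset.sum_div, div_self (sum_pos_of_forall_pos hv).ne']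

theorem div_sum_self_pos (k : ι) : 0 < v k / ∑ i, v i :=
  div_pos (hv k) (sum_pos_of_forall_pos hv)

theorem injective_div_sum_self (hinj : Function.Injective v) :
    Function.Injective fun k => v k / ∑ i, v i :=
  fun _ _ h => hinj ((div_left_inj' (sum_pos_of_forall_pos hv).ne').mp h)

end Normalize

section Trace

variable [Fintype ι] [DecidableEq ι]

theorem Matrix.trace_diagonal_mul_commutator_eq_zero {R : Type*} [CommRing R] (d : ι → R)
    {M P : Matrix ι ι R} (hM : Mᵀ = M) (hP : Pᵀ = P) :
    trace (diagonal d * (M * P - P * M)) = 0 := by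
  have : trace (diagonal d * (M * P)) = trace (diagonal d * (P * M)) := by
    rw [← trace_transpose, transpose_mul, transpose_mul, hM, hP, diagonal_transpose,
      trace_mul_comm]
  rw [Matrix.mul_sub, trace_sub, this, sub_self]

theorem Matrix.trace_diagonal_mul_mul_of_isHermitian (d : ι → ℂ) (A : Matrix ι ι ℂ)
    {B : Matrix ι ι ℂ} (hB : B.IsHermitian) :
    trace (diagonal d * A * B) = ∑ k, ∑ l, d k * (A k l * starRingEnd ℂ (B k l)) := by
  refine Finset.sum_congr rfl fun k _ => ?_
  rw [diag_apply, mul_apply]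
  refine Finset.sum_congr rfl fun l _ => ?_
  rw [diagonal_mul, ← hB.apply l k, mul_assoc]
  rfl

end Trace

section EdgeMatrix

variable [DecidableEq ι]

/-- For `z = s(a, b)` with `a ≠ b` this is `E_ab + E_ba`. -/
def edgeMatrix (z : Sym2 ι) : Matrix ι ι ℂ :=
  of fun k l => if s(k, l) = z then 1 else 0

theorem edgeMatrix_transpose (z : Sym2 ι) : (edgeMatrix z)ᵀ = edgeMatrix z := by
  ext k l
  simp only [edgeMatrix, transpose_apply, of_apply, Sym2.eq_swap]

theorem edgeMatrix_isHermitian (z : Sym2 ι) : (edgeMatrix z).IsHermitian := by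
  ext k l
  simp only [edgeMatrix, conjTranspose_apply, of_apply, Sym2.eq_swap, apply_ite star,
    star_one, star_zero]

theorem trace_diagonal_mul_edgeMatrix [Fintype ι] (d : ι → ℂ) {z : Sym2 ι} (hz : ¬z.IsDiag) :
    trace (diagonal d * edgeMatrix z) = 0 := by
  refine Finset.sum_eq_zero fun k _ => ?_
  have : s(k, k) ≠ z := fun h => hz (h ▸ Sym2.mk_isDiag_iff.mpr rfl)
  simp [edgeMatrix, this]

theorem re_edgeMatrix_mul_conj (z w : Sym2 ι) (k l : ι) :
    (edgeMatrix z k l * starRingEnd ℂ (edgeMatrix w k l)).re =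
      if s(k, l) = z ∧ z = w then 1 else 0 := by
  by_cases hz : s(k, l) = z <;> by_cases hw : s(k, l) = w <;>
    simp_all [edgeMatrix]

theorem sum_sum_ite_mk_eq [Fintype ι] {R : Type*} [AddCommMonoid R] (f : ι → ι → R) {a b : ι}
    (hab : a ≠ b) :
    ∑ k, ∑ l, (if s(k, l) = s(a, b) then f k l else 0) = f a b + f b a := by
  have split : ∀ k l, (if k = a ∧ l = b ∨ k = b ∧ l = a then f k l else 0) =
      (if k = a ∧ l = b then f k l else 0) + (if k = b ∧ l = a then f k l else 0) := by
    intro k l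
    by_cases h : k = a ∧ l = b
    · obtain ⟨rfl, rfl⟩ := h
      simp [hab]
    · simp [h]
  simp only [Sym2.eq_iff, split, Finset.sum_add_distrib]
  simp [ite_and]

theorem sum_sum_ite_mk_pos [Fintype ι] (f : ι → ι → ℝ) (hf : ∀ a b, a ≠ b → 0 < f a b + f b a)
    {z : Sym2 ι} (hz : ¬z.IsDiag) :
    0 < ∑ k, ∑ l, if s(k, l) = z then f k l else 0 := by
  induction z using Sym2.ind with
  | h a b =>
    have hab : a ≠ b := fun h => hz (Sym2.mk_isDiag_iff.mpr h)
    rw [sum_sum_ite_mk_eq f hab]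
    exact hf a b hab

theorem re_trace_diagonal_mul_mul_sub_sum [Fintype ι] (lam : ι → ℝ) (m : ℝ → ℝ → ℝ) (A : Matrix ι ι ℂ)
    {B : Matrix ι ι ℂ} (hB : B.IsHermitian) :
    (trace (diagonal (fun k => (lam k : ℂ)) * A * B)).re -
        ∑ k, ∑ l, m (lam k) (lam l) * (A k l * starRingEnd ℂ (B k l)).re =
      ∑ k, ∑ l, (lam k - m (lam k) (lam l)) * (A k l * starRingEnd ℂ (B k l)).re := by
  simp only [trace_diagonal_mul_mul_of_isHermitian _ A hB, Complex.re_sum, Complex.re_ofReal_mul,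
    sub_mul, Finset.sum_sub_distrib]

theorem sum_sum_mul_re_edgeMatrix_mul_conj [Fintype ι] (c : ι → ι → ℝ) (z w : Sym2 ι) :
    ∑ k, ∑ l, c k l * (edgeMatrix z k l * starRingEnd ℂ (edgeMatrix w k l)).re =
      if z = w then ∑ k, ∑ l, (if s(k, l) = z then c k l else 0) else 0 := by
  simp only [re_edgeMatrix_mul_conj, ite_and]
  split_ifs <;> simp

end EdgeMatrix

theorem fisher_det_le_robertson_det_false_general
    (n N : ℕ) (hn : 2 ≤ n) (hNn : N ≤ n * (n - 1) / 2)
    (m : ℝ → ℝ → ℝ)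
    (hm : ∀ x y : ℝ, 0 < x → 0 < y → x ≠ y → 0 < m x y ∧ m x y < (x + y) / 2) :
    ∃ lam : Fin n → ℝ, Function.Injective lam ∧ (∀ k, 0 < lam k) ∧ (∑ k, lam k = 1) ∧
    ∃ A : Fin N → Matrix (Fin n) (Fin n) ℂ, (∀ h, (A h).IsHermitian) ∧
    ∃ ρ : Matrix (Fin n) (Fin n) ℂ, ρ = Matrix.diagonal (fun k => (lam k : ℂ)) ∧
      (∀ h j, Matrix.trace (ρ * (A h * A j - A j * A h)) = 0) ∧
    ∃ A₀ : Fin N → Matrix (Fin n) (Fin n) ℂ,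
      (∀ h, A₀ h = A h - (Matrix.trace (ρ * A h)) • (1 : Matrix (Fin n) (Fin n) ℂ)) ∧
    ∃ G : Matrix (Fin N) (Fin N) ℝ,
      (∀ h j, G h j = (Matrix.trace (ρ * A₀ h * A₀ j)).re -
        ∑ k, ∑ l, m (lam k) (lam l) * (A₀ h k l * (starRingEnd ℂ) (A₀ j k l)).re) ∧
      0 < G.det := by
  have : Nonempty (Fin n) := ⟨⟨0, by omega⟩⟩
  obtain ⟨z⟩ := exists_embedding_fin_offDiag_sym2 hNn
  have hv : ∀ k : Fin n, (0 : ℝ) < k + 1 := fun k => by positivity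
  have hv_inj : Function.Injective fun k : Fin n => (k : ℝ) + 1 := fun a b h => Fin.ext (by simpa using h)
  set lam : Fin n → ℝ := fun k => ((k : ℝ) + 1) / ∑ i : Fin n, ((i : ℝ) + 1)
  have hlam_inj : Function.Injective lam := injective_div_sum_self hv hv_inj
  set A : Fin N → Matrix (Fin n) (Fin n) ℂ := fun h => edgeMatrix (z h : Sym2 (Fin n))
  set c : Fin n → Fin n → ℝ := fun k l => lam k - m (lam k) (lam l)
  have hc : ∀ a b, a ≠ b → 0 < c a b + c b a := fun a b hab => by
    have hlab := hlam_inj.ne hab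
    linarith [(hm _ _ (div_sum_self_pos hv a) (div_sum_self_pos hv b) hlab).2,
      (hm _ _ (div_sum_self_pos hv b) (div_sum_self_pos hv a) hlab.symm).2]
  refine ⟨lam, hlam_inj, div_sum_self_pos hv, sum_div_sum_self_eq_one hv, A,
    fun h => edgeMatrix_isHermitian _, _, rfl,
    fun h j => trace_diagonal_mul_commutator_eq_zero _ (edgeMatrix_transpose _)
      (edgeMatrix_transpose _),
    A, fun h => by rw [trace_diagonal_mul_edgeMatrix _ (z h).2, zero_smul, sub_zero],
    diagonal fun h => ∑ k, ∑ l, if s(k, l) = z h then c k l else 0, fun h j => ?_, ?_⟩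
  · rw [re_trace_diagonal_mul_mul_sub_sum lam m _ (edgeMatrix_isHermitian _),
      sum_sum_mul_re_edgeMatrix_mul_conj, diagonal_apply]
    simp only [Subtype.coe_inj, z.injective.eq_iff]
    rfl
  · rw [det_diagonal]
    exact Finset.prod_pos fun h _ => sum_sum_ite_mk_pos c hc (z h).2

/-- For `n ≥ 2` and `1 ≤ N ≤ n(n−1)/2`, and any `m` with
`0 < m(x,y) < (x+y)/2` for positive `x ≠ y`, there exist a faithful diagonal state with
pairwise distinct eigenvalues and Hermitian matrices `A_1,…,A_N`, pairwise commuting in the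
state (`Tr(ρ[A_h,A_j]) = 0`, so the Robertson matrix vanishes and has determinant `0`),
while `det G(m) > 0`; hence `det G(m) ≤ det R` is in general false. -/
theorem fisher_det_le_robertson_det_false
    (n N : ℕ) (hn : 2 ≤ n) (hN : 1 ≤ N) (hNn : N ≤ n * (n - 1) / 2)
    (m : ℝ → ℝ → ℝ)
    (hm : ∀ x y : ℝ, 0 < x → 0 < y → x ≠ y → 0 < m x y ∧ m x y < (x + y) / 2) :
    ∃ lam : Fin n → ℝ, Function.Injective lam ∧ (∀ k, 0 < lam k) ∧ (∑ k, lam k = 1) ∧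
    ∃ A : Fin N → Matrix (Fin n) (Fin n) ℂ, (∀ h, (A h).IsHermitian) ∧
    ∃ ρ : Matrix (Fin n) (Fin n) ℂ, ρ = Matrix.diagonal (fun k => (lam k : ℂ)) ∧
      (∀ h j, Matrix.trace (ρ * (A h * A j - A j * A h)) = 0) ∧
    ∃ A₀ : Fin N → Matrix (Fin n) (Fin n) ℂ,
      (∀ h, A₀ h = A h - (Matrix.trace (ρ * A h)) • (1 : Matrix (Fin n) (Fin n) ℂ)) ∧
    ∃ G : Matrix (Fin N) (Fin N) ℝ,
      (∀ h j, G h j = (Matrix.trace (ρ * A₀ h * A₀ j)).re -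
        ∑ k, ∑ l, m (lam k) (lam l) * (A₀ h k l * (starRingEnd ℂ) (A₀ j k l)).re) ∧
      0 < G.det :=
  fisher_det_le_robertson_det_false_general n N hn hNn m hm
end

section
/- Let N ≥ 1, let x_1,…,x_N, y_1,…,y_N > 0, and let m : (0,∞)×(0,∞) → ℝ satisfy 2ab/(a+b) ≤ m(a,b) ≤ (a+b)/2 for all a,b > 0. Then 0 < H(h; x, y) ≤ H(m; x, y) ≤ (1/2^N)·Π_{j=1}^N (x_j + y_j), where h(a,b) := 2ab/(a+b) is the harmonic mean. -/
/-- bounds for `H`. If `2ab/(a+b) ≤ m(a,b) ≤ (a+b)/2` on positives (as for any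
Kubo–Ando mean), then `0 < H(h;x,y) ≤ H(m;x,y) ≤ (1/2^N)·Π (x_j+y_j)`, where
`h(a,b) = 2ab/(a+b)` is the harmonic mean. -/
theorem H_bounds
    (N : ℕ) (hN : 1 ≤ N) (x y : Fin N → ℝ)
    (hx : ∀ j, 0 < x j) (hy : ∀ j, 0 < y j)
    (m : ℝ → ℝ → ℝ)
    (hm : ∀ a b : ℝ, 0 < a → 0 < b →
      2 * a * b / (a + b) ≤ m a b ∧ m a b ≤ (a + b) / 2) :
    0 < (∏ j, (x j + y j) / 2) -
        (∏ j, ((x j + y j) / 2 - 2 * x j * y j / (x j + y j)))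
    ∧ (∏ j, (x j + y j) / 2) -
        (∏ j, ((x j + y j) / 2 - 2 * x j * y j / (x j + y j)))
      ≤ (∏ j, (x j + y j) / 2) - (∏ j, ((x j + y j) / 2 - m (x j) (y j)))
    ∧ (∏ j, (x j + y j) / 2) - (∏ j, ((x j + y j) / 2 - m (x j) (y j)))
      ≤ (1 / 2 ^ N) * ∏ j, (x j + y j) := by
  have hxy : ∀ j, 0 < x j + y j := fun j => add_pos (hx j) (hy j)
  have hA : ∀ j, (0:ℝ) < (x j + y j) / 2 := fun j => by linarith [hxy j]
  have hhpos : ∀ j, (0:ℝ) < 2 * x j * y j / (x j + y j) := fun j => by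
    have := hx j; have := hy j; positivity
  have hc0 : ∀ j, (0:ℝ) ≤ (x j + y j) / 2 - 2 * x j * y j / (x j + y j) := by
    intro j
    rw [sub_nonneg, div_le_div_iff₀ (hxy j) two_pos]
    nlinarith [sq_nonneg (x j - y j)]
  have hcA : ∀ j, (x j + y j) / 2 - 2 * x j * y j / (x j + y j) < (x j + y j) / 2 :=
    fun j => by linarith [hhpos j]
  have hd0 : ∀ j, (0:ℝ) ≤ (x j + y j) / 2 - m (x j) (y j) := fun j => by
    linarith [(hm (x j) (y j) (hx j) (hy j)).2]
  have hdc : ∀ j, (x j + y j) / 2 - m (x j) (y j)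
      ≤ (x j + y j) / 2 - 2 * x j * y j / (x j + y j) := fun j => by
    linarith [(hm (x j) (y j) (hx j) (hy j)).1]
  have hApos : (0:ℝ) < ∏ j, (x j + y j) / 2 :=
    Finset.prod_pos fun j _ => hA j
  -- strict: ∏ c < ∏ A
  have hlt : (∏ j, ((x j + y j) / 2 - 2 * x j * y j / (x j + y j))) <
      ∏ j, (x j + y j) / 2 := by
    by_cases h : ∀ j, (0:ℝ) < (x j + y j) / 2 - 2 * x j * y j / (x j + y j)
    · exact Finset.prod_lt_prod_of_nonempty (fun j _ => h j) (fun j _ => hcA j)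
        (Finset.univ_nonempty_iff.mpr ⟨⟨0, hN⟩⟩)
    · push_neg at h
      obtain ⟨j, hj⟩ := h
      have hj0 : (x j + y j) / 2 - 2 * x j * y j / (x j + y j) = 0 :=
        le_antisymm hj (hc0 j)
      calc (∏ j, ((x j + y j) / 2 - 2 * x j * y j / (x j + y j))) = 0 :=
            Finset.prod_eq_zero (Finset.mem_univ j) hj0
        _ < _ := hApos
  refine ⟨by linarith, ?_, ?_⟩
  · have : (∏ j, ((x j + y j) / 2 - m (x j) (y j))) ≤
        ∏ j, ((x j + y j) / 2 - 2 * x j * y j / (x j + y j)) :=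
      Finset.prod_le_prod (fun j _ => hd0 j) (fun j _ => hdc j)
    linarith
  · have h1 : (0:ℝ) ≤ ∏ j, ((x j + y j) / 2 - m (x j) (y j)) :=
      Finset.prod_nonneg fun j _ => hd0 j
    have h2 : (∏ j, (x j + y j) / 2) = (1 / 2 ^ N) * ∏ j, (x j + y j) := by
      rw [Finset.prod_div_distrib, Finset.prod_const, Finset.card_univ,
        Fintype.card_fin, one_div, div_eq_inv_mul]
    linarith
end

section
/- Let N ≥ 1 and let z : {1,…,N}×{1,…,N} → ℂ. For each permutation σ of {1,…,N} define the real N×N matrix B(σ) by B(σ)_{hj} := Re( z(h, σ(h)) · conj( z(j, σ(h)) ) ), and for each u : {1,…,N} → {0,1} define the real N×N matrix D(u) by D(u)_{hj} := Re z(h,j) if u(j) = 0 and D(u)_{hj} := Im z(h,j) if u(j) = 1. Then Σ_{σ ∈ S_N} det B(σ) = Σ_{u ∈ {0,1}^N} ( det D(u) )². -/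
/-!
Both sides equal `∑_{α,β ∈ S_N} sgn α sgn β ∏_k Re(z(α k, k) · conj z(β k, k))`.
On the right, expand each `det D(u)` by the Leibniz formula and sum over `u` first: as
`Re(a · conj b) = Re a Re b + Im a Im b`, the choices `u k ∈ {Re, Im}` for column `k` factor into
that product. On the left, for fixed `α` the inner sum over `β` is the determinant of `B(α⁻¹)`
with its rows permuted by `α`, and the two signs of `α` cancel.
-/

open Matrix Equiv

section PermPairSum

variable {n ι R : Type*} [Fintype n] [DecidableEq n] [Fintype ι] [CommRing R]

theorem sum_sign_mul_prod_eq_det (M : Matrix n n R) :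
    ∑ β : Perm n, (Perm.sign β : R) * ∏ k, M k (β k) = M.det := by
  rw [← det_transpose, det_apply']
  rfl

theorem sum_det_of_perm_eq_sum_sign_mul_sign_mul_prod (g : n → n → n → R) :
    ∑ σ : Perm n, (of fun h j => g h j (σ h)).det
      = ∑ α : Perm n, ∑ β : Perm n,
          (Perm.sign α : R) * Perm.sign β * ∏ k, g (α k) (β k) k := by
  rw [← Equiv.sum_comp (Equiv.inv (Perm n))]
  refine Finset.sum_congr rfl fun α _ => ?_
  have hsign : (Perm.sign α : R) * Perm.sign α = 1 := by
    rw [← Int.cast_mul, Int.units_coe_mul_self, Int.cast_one]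
  have hrows : (of fun h j => g h j (α⁻¹ h)).submatrix α id = of fun k j => g (α k) j k := by
    ext k j
    simp
  calc (of fun h j => g h j (α⁻¹ h)).det
      = Perm.sign α * (Perm.sign α * (of fun h j => g h j (α⁻¹ h)).det) := by
        rw [← mul_assoc, hsign, one_mul]
    _ = Perm.sign α * (of fun k j => g (α k) j k).det := by rw [← det_permute, hrows]
    _ = ∑ β : Perm n, (Perm.sign α : R) * Perm.sign β * ∏ k, g (α k) (β k) k := by
        simp_rw [← sum_sign_mul_prod_eq_det, Finset.mul_sum, mul_assoc, of_apply]

theorem sum_det_mul_det_over_column_choices (v w : ι → Matrix n n R) :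
    ∑ u : n → ι, (of fun h j => v (u j) h j).det * (of fun h j => w (u j) h j).det
      = ∑ α : Perm n, ∑ β : Perm n,
          (Perm.sign α : R) * Perm.sign β * ∏ k, ∑ i, v i (α k) k * w i (β k) k := by
  have hexpand : ∀ u : n → ι,
      (of fun h j => v (u j) h j).det * (of fun h j => w (u j) h j).det
        = ∑ α : Perm n, ∑ β : Perm n,
            (Perm.sign α : R) * Perm.sign β * ∏ k, v (u k) (α k) k * w (u k) (β k) k := by
    intro u
    simp_rw [det_apply', Finset.sum_mul_sum, of_apply, Finset.prod_mul_distrib]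
    exact Finset.sum_congr rfl fun _ _ => Finset.sum_congr rfl fun _ _ => by ring
  simp_rw [hexpand, Fintype.prod_sum, Finset.mul_sum]
  rw [Finset.sum_comm]
  exact Finset.sum_congr rfl fun _ _ => Finset.sum_comm

end PermPairSum

theorem sum_det_B_eq_sum_sq_det_D_general
    (N : ℕ) (z : Fin N → Fin N → ℂ) :
    ∑ σ : Equiv.Perm (Fin N),
        (Matrix.of fun h j : Fin N =>
          (z h (σ h) * (starRingEnd ℂ) (z j (σ h))).re).det
      = ∑ u : Fin N → Bool,
        ((Matrix.of fun h j : Fin N =>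
          if u j then (z h j).im else (z h j).re).det) ^ 2 := by
  let w : Bool → Matrix (Fin N) (Fin N) ℝ := fun b h k => if b then (z h k).im else (z h k).re
  have hentry : ∀ h j k, (z h k * (starRingEnd ℂ) (z j k)).re = ∑ b, w b h k * w b j k := by
    intro h j k
    simp only [Complex.mul_re, Complex.conj_re, Complex.conj_im, Fintype.sum_bool, w, if_true,
      Bool.false_eq_true, if_false]
    ring
  simp_rw [sq]
  rw [sum_det_of_perm_eq_sum_sign_mul_sign_mul_prod
      (fun h j k => (z h k * (starRingEnd ℂ) (z j k)).re),
    sum_det_mul_det_over_column_choices w w]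
  simp_rw [hentry]

/-- the combinatorial identity behind nonnegativity of `K_{α,β}`. For any
`z : {1,…,N}² → ℂ`, with `B(σ)_{hj} := Re(z(h,σ(h))·conj(z(j,σ(h))))` and
`D(u)_{hj} := Re z(h,j)` if `u(j)=0`, `Im z(h,j)` if `u(j)=1`, one has
`Σ_{σ ∈ S_N} det B(σ) = Σ_{u ∈ {0,1}^N} (det D(u))²`. -/
theorem sum_det_B_eq_sum_sq_det_D
    (N : ℕ) (hN : 1 ≤ N) (z : Fin N → Fin N → ℂ) :
    ∑ σ : Equiv.Perm (Fin N),
        (Matrix.of fun h j : Fin N =>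
          (z h (σ h) * (starRingEnd ℂ) (z j (σ h))).re).det
      = ∑ u : Fin N → Bool,
        ((Matrix.of fun h j : Fin N =>
          if u j then (z h j).im else (z h j).re).det) ^ 2 :=
  sum_det_B_eq_sum_sq_det_D_general N z
end

section
/- Let N ≥ 1 and let z : {1,…,N}×{1,…,N} → ℂ. For each permutation σ of {1,…,N} define the real N×N matrix B(σ) by B(σ)_{hj} := Re( z(h, σ(h)) · conj( z(j, σ(h)) ) ). Then Σ_{σ ∈ S_N} det B(σ) ≥ 0. -/
open Matrix Complex Finset Equiv

private noncomputable def Mmat {N : ℕ} (z : Fin N → Fin N → ℂ) (T : Finset (Fin N)) :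
    Matrix (Fin N) (Fin N) ℂ :=
  Matrix.of fun i h => if i ∈ T then z h i else (starRingEnd ℂ) (z h i)

private lemma detBc {N : ℕ} (z : Fin N → Fin N → ℂ) (σ : Equiv.Perm (Fin N)) :
    (Matrix.of fun h j : Fin N =>
        ((z h (σ h) * (starRingEnd ℂ) (z j (σ h))).re : ℂ)).det
    = (2⁻¹ : ℂ) ^ N * ∑ S : Finset (Fin N),
        ((∏ h, (if σ h ∈ S.map σ.toEmbedding then z h (σ h)
            else (starRingEnd ℂ) (z h (σ h)))) *
          (((Equiv.Perm.sign σ : ℤ) : ℂ) *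
            ((Mmat z (S.map σ.toEmbedding)).map (starRingEnd ℂ)).det)) := by
  classical
  set p : Fin N → Fin N → ℂ := fun h j => z h (σ h) * (starRingEnd ℂ) (z j (σ h)) with hp
  set q : Fin N → Fin N → ℂ := fun h j => (starRingEnd ℂ) (z h (σ h)) * z j (σ h) with hq
  have hre : ∀ x : ℂ, ((x.re : ℝ) : ℂ) = 2⁻¹ * (x + (starRingEnd ℂ) x) := by
    intro x
    simp [Complex.ext_iff]
    ring
  have h1 : (Matrix.of fun h j : Fin N =>
        ((z h (σ h) * (starRingEnd ℂ) (z j (σ h))).re : ℂ))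
      = (2⁻¹ : ℂ) • Matrix.of (fun h j => p h j + q h j) := by
    ext h j
    simp only [Matrix.of_apply, Matrix.smul_apply, smul_eq_mul, hp, hq]
    rw [hre]
    simp [_root_.map_mul, mul_comm]
  rw [h1, Matrix.det_smul, Fintype.card_fin]
  congr 1
  have h2 : (Matrix.of fun h j => p h j + q h j).det
      = ∑ S : Finset (Fin N), Matrix.detRowAlternating (S.piecewise p q) := by
    have : (Matrix.of fun h j => p h j + q h j).det
        = Matrix.detRowAlternating (p + q) := rfl
    rw [this]
    exact (Matrix.detRowAlternating.toMultilinearMap.map_add_univ p q)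
  rw [h2]
  refine Finset.sum_congr rfl (fun S _ => ?_)
  have h3 : S.piecewise p q = fun h =>
      (if h ∈ S then z h (σ h) else (starRingEnd ℂ) (z h (σ h))) •
      (fun j => if h ∈ S then (starRingEnd ℂ) (z j (σ h)) else z j (σ h)) := by
    funext h j
    by_cases hS : h ∈ S <;> simp [Finset.piecewise, hS, hp, hq]
  have h3' := Matrix.detRowAlternating.toMultilinearMap.map_smul_univ
    (fun h => if h ∈ S then z h (σ h) else (starRingEnd ℂ) (z h (σ h)))
    (fun h j => if h ∈ S then (starRingEnd ℂ) (z j (σ h)) else z j (σ h))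
  rw [h3]
  refine h3'.trans ?_
  have hmem : ∀ h, σ h ∈ S.map σ.toEmbedding ↔ h ∈ S := fun h => Finset.mem_map' _
  have h4 : Matrix.of (fun h j => if h ∈ S then (starRingEnd ℂ) (z j (σ h)) else z j (σ h))
      = ((Mmat z (S.map σ.toEmbedding)).map (starRingEnd ℂ)).submatrix σ id := by
    ext h j
    by_cases hS : h ∈ S <;>
      simp [Mmat, Matrix.submatrix_apply, Matrix.map_apply, hS, hmem]
  have hB : Matrix.detRowAlternating.toMultilinearMap
      (fun h j : Fin N => if h ∈ S then (starRingEnd ℂ) (z j (σ h)) else z j (σ h))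
      = ((Equiv.Perm.sign σ : ℤ) : ℂ) *
        ((Mmat z (S.map σ.toEmbedding)).map (starRingEnd ℂ)).det := by
    have e1 : Matrix.detRowAlternating.toMultilinearMap
        (fun h j : Fin N => if h ∈ S then (starRingEnd ℂ) (z j (σ h)) else z j (σ h))
        = (((Mmat z (S.map σ.toEmbedding)).map (starRingEnd ℂ)).submatrix σ id).det := by
      rw [← h4]; rfl
    rw [e1, Matrix.det_permute]
  rw [hB, smul_eq_mul]
  congr 1
  exact Finset.prod_congr rfl (fun h _ => by simp only [hmem])

/-- nonnegativity of `K_{α,β}`. For any `z : {1,…,N}² → ℂ`, with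
`B(σ)_{hj} := Re(z(h,σ(h))·conj(z(j,σ(h))))`, one has `Σ_{σ ∈ S_N} det B(σ) ≥ 0`. -/
theorem sum_det_B_nonneg
    (N : ℕ) (hN : 1 ≤ N) (z : Fin N → Fin N → ℂ) :
    0 ≤ ∑ σ : Equiv.Perm (Fin N),
        (Matrix.of fun h j : Fin N =>
          (z h (σ h) * (starRingEnd ℂ) (z j (σ h))).re).det := by
  classical
  set g : Equiv.Perm (Fin N) → Finset (Fin N) → ℂ := fun σ T =>
    (∏ h, (if σ h ∈ T then z h (σ h) else (starRingEnd ℂ) (z h (σ h)))) *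
      (((Equiv.Perm.sign σ : ℤ) : ℂ) * ((Mmat z T).map (starRingEnd ℂ)).det) with hg
  have key : ((∑ σ : Equiv.Perm (Fin N),
        (Matrix.of fun h j : Fin N =>
          (z h (σ h) * (starRingEnd ℂ) (z j (σ h))).re).det : ℝ) : ℂ)
      = (2⁻¹ : ℂ) ^ N * ∑ T : Finset (Fin N),
          ((Mmat z T).det * (starRingEnd ℂ) ((Mmat z T).det)) := by
    push_cast
    have cast1 : ∀ σ : Equiv.Perm (Fin N),
        (((Matrix.of fun h j : Fin N =>
            (z h (σ h) * (starRingEnd ℂ) (z j (σ h))).re).det : ℝ) : ℂ)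
        = (Matrix.of fun h j : Fin N =>
            ((z h (σ h) * (starRingEnd ℂ) (z j (σ h))).re : ℂ)).det :=
      fun σ => RingHom.map_det Complex.ofRealHom _
    have e1 : ∑ σ : Equiv.Perm (Fin N),
          (((Matrix.of fun h j : Fin N =>
            (z h (σ h) * (starRingEnd ℂ) (z j (σ h))).re).det : ℝ) : ℂ)
        = (2⁻¹ : ℂ) ^ N * ∑ σ : Equiv.Perm (Fin N),
            ∑ S : Finset (Fin N), g σ (S.map σ.toEmbedding) := by
      rw [Finset.mul_sum]
      exact Finset.sum_congr rfl fun σ _ => ((cast1 σ).trans (detBc z σ))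
    rw [e1]
    congr 1
    have e2 : ∀ σ : Equiv.Perm (Fin N),
        (∑ S : Finset (Fin N), g σ (S.map σ.toEmbedding)) = ∑ T : Finset (Fin N), g σ T := by
      intro σ
      simpa [Equiv.finsetCongr_apply] using Equiv.sum_comp σ.finsetCongr (g σ)
    rw [Finset.sum_congr rfl fun σ _ => e2 σ, Finset.sum_comm]
    refine Finset.sum_congr rfl fun T _ => ?_
    have e3 : (∑ σ : Equiv.Perm (Fin N), g σ T)
        = (Mmat z T).det * ((Mmat z T).map (starRingEnd ℂ)).det := by
      rw [Matrix.det_apply' (Mmat z T), Finset.sum_mul]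
      refine Finset.sum_congr rfl fun σ _ => ?_
      simp only [hg, Mmat, Matrix.of_apply]
      ring
    rw [e3]
    congr 1
    rw [← RingHom.mapMatrix_apply, ← RingHom.map_det]
  have key2 : (∑ σ : Equiv.Perm (Fin N),
        (Matrix.of fun h j : Fin N =>
          (z h (σ h) * (starRingEnd ℂ) (z j (σ h))).re).det : ℝ)
      = (2⁻¹ : ℝ) ^ N * ∑ T : Finset (Fin N), Complex.normSq ((Mmat z T).det) := by
    apply Complex.ofReal_injective
    rw [key]
    push_cast
    congr 1
    exact Finset.sum_congr rfl fun T _ => by rw [Complex.mul_conj]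
  rw [key2]
  exact mul_nonneg (by positivity)
    (Finset.sum_nonneg fun T _ => Complex.normSq_nonneg _)
end

section
/- Let f : (0,∞) → (0,∞) be operator monotone, symmetric (f(x) = x·f(1/x) for all x > 0) and normalized (f(1) = 1). Then for every x > 0, 2x/(1+x) ≤ f(x) ≤ (1+x)/2. -/
/-!
Operator monotonicity gives a Jensen-type inequality: if `A > 0`, `v` is a unit vector and
`α > ⟪v, A v⟫`, then with `z = α v - A v` the rank-one perturbation
`B = A + (α - ⟪v, A v⟫)⁻¹ z z*` satisfies `B ≥ A` and `B v = α v`, so that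
`⟪v, f(A) v⟫ ≤ ⟪v, f(B) v⟫ = f(α)`. For `A = diag(x, 1/x)` and `v = (1, √x) / √(1 + x)` this
reads `2 f(x) / (1 + x) ≤ f(α)` for every `α > 1`, while symmetry and monotonicity give
`f(α) ≤ α` for `α ≥ 1`: this is the arithmetic-mean bound. The harmonic-mean bound is the
arithmetic-mean bound for the dual function `t ↦ 1 / f(1/t)`, which is again positive,
symmetric, normalized and operator monotone because inversion is operator antitone.
-/

open Matrix
open scoped ComplexOrder

/-- A function `f : ℝ → ℝ` is operator monotone on `(0,∞)` if for every `n` and all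
positive-definite (Hermitian) complex `n×n` matrices `A, B` with `B − A` positive
semidefinite, the matrix `f(B) − f(A)` is positive semidefinite, where `f` is applied
through the functional calculus for Hermitian matrices (on the eigenvalues). -/
def OperatorMonotoneOn (f : ℝ → ℝ) : Prop :=
  ∀ (n : ℕ) (A B : Matrix (Fin n) (Fin n) ℂ) (hA : A.PosDef) (hB : B.PosDef),
    (B - A).PosSemidef → ((hB.1.cfc f) - (hA.1.cfc f)).PosSemidef

namespace Matrix.IsHermitian

variable {𝕜 : Type*} [RCLike 𝕜] {n : Type*} [Fintype n] [DecidableEq n] {A : Matrix n n 𝕜}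

theorem cfc_mulVec_of_mulVec_eq_smul (hA : A.IsHermitian) (f : ℝ → ℝ) {v : n → 𝕜} {α : ℝ}
    (hv : A *ᵥ v = (α : 𝕜) • v) : hA.cfc f *ᵥ v = (f α : 𝕜) • v := by
  have hUU : (hA.eigenvectorUnitary : Matrix n n 𝕜) * star (hA.eigenvectorUnitary : Matrix n n 𝕜)
      = 1 :=
    Unitary.mul_star_self_of_mem hA.eigenvectorUnitary.2
  set w := (star hA.eigenvectorUnitary : Matrix n n 𝕜) *ᵥ v
  have hdiag : diagonal (RCLike.ofReal ∘ hA.eigenvalues) *ᵥ w = (α : 𝕜) • w := by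
    rw [← hA.conjStarAlgAut_star_eigenvectorUnitary, Unitary.conjStarAlgAut_star_apply,
      mulVec_mulVec, mul_assoc, hUU, mul_one, ← mulVec_mulVec, hv, mulVec_smul]
  have hdiag_f : diagonal (RCLike.ofReal ∘ f ∘ hA.eigenvalues) *ᵥ w = (f α : 𝕜) • w := by
    ext i
    have hi := congrFun hdiag i
    simp only [mulVec_diagonal, Function.comp_apply, Pi.smul_apply, smul_eq_mul] at hi ⊢
    rcases mul_eq_mul_right_iff.mp hi with heq | hw
    · rw [RCLike.ofReal_inj.mp heq]
    · rw [hw, mul_zero, mul_zero]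
  rw [IsHermitian.cfc, Unitary.conjStarAlgAut_apply, ← mulVec_mulVec, ← mulVec_mulVec, hdiag_f,
    mulVec_smul, mulVec_mulVec, hUU, one_mulVec]

theorem cfc_diagonal {d : n → ℝ} (hd : (diagonal (RCLike.ofReal ∘ d : n → 𝕜)).IsHermitian)
    (f : ℝ → ℝ) : hd.cfc f = diagonal (RCLike.ofReal ∘ f ∘ d) := by
  refine ext_of_mulVec_single fun j => ?_
  have hj : diagonal (RCLike.ofReal ∘ d : n → 𝕜) *ᵥ Pi.single j 1 = (d j : 𝕜) • Pi.single j 1 :=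
    by
    rw [diagonal_mulVec_single, ← Pi.single_smul, smul_eq_mul, Function.comp_apply]
  rw [hd.cfc_mulVec_of_mulVec_eq_smul f hj, diagonal_mulVec_single, ← Pi.single_smul, smul_eq_mul,
    Function.comp_apply, Function.comp_apply]

end Matrix.IsHermitian

theorem OperatorMonotoneOn.re_dotProduct_cfc_le {f : ℝ → ℝ} (hf : OperatorMonotoneOn f) {n : ℕ}
    {A : Matrix (Fin n) (Fin n) ℂ} (hA : A.PosDef) {v : Fin n → ℂ} (hv : star v ⬝ᵥ v = 1)
    {α : ℝ} (hα : (star v ⬝ᵥ (A *ᵥ v)).re < α) :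
    (star v ⬝ᵥ (hA.1.cfc f *ᵥ v)).re ≤ f α := by
  set m := (star v ⬝ᵥ (A *ᵥ v)).re
  have hm : star v ⬝ᵥ (A *ᵥ v) = m := by
    apply Complex.ext (by simp [m])
    simpa using hA.1.im_star_dotProduct_mulVec_self v
  set z := (α : ℂ) • v - A *ᵥ v
  have hzv : star z ⬝ᵥ v = ((α - m : ℝ) : ℂ) := by
    simp only [z, star_sub, star_smul, sub_dotProduct, smul_dotProduct, hv, star_mulVec,
      ← dotProduct_mulVec, hA.1.eq, hm]
    simp
  set B := A + (α - m)⁻¹ • vecMulVec z (star z)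
  have hBA : (B - A).PosSemidef := by
    rw [add_sub_cancel_left]
    exact (posSemidef_vecMulVec_self_star z).smul (inv_nonneg.mpr (sub_pos.mpr hα).le)
  have hB : B.PosDef := by simpa [B] using hA.add_posSemidef hBA
  have hBv : B *ᵥ v = (α : ℂ) • v := by
    have hαm : (α - m : ℝ) ≠ 0 := (sub_pos.mpr hα).ne'
    rw [add_mulVec, smul_mulVec, vecMulVec_mulVec, hzv, op_smul_eq_smul, ← Complex.coe_smul,
      smul_smul, ← Complex.ofReal_mul, inv_mul_cancel₀ hαm, Complex.ofReal_one, one_smul,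
      add_sub_cancel]
  have key := (hf n A B hA hB hBA).dotProduct_mulVec_nonneg v
  rw [sub_mulVec, dotProduct_sub, hB.1.cfc_mulVec_of_mulVec_eq_smul f hBv, dotProduct_smul, hv]
    at key
  simpa using (Complex.le_def.mp key).1

theorem OperatorMonotoneOn.sum_mul_le_of_sum_mul_lt {f : ℝ → ℝ} (hf : OperatorMonotoneOn f) {n : ℕ}
    {d w : Fin n → ℝ} (hd : ∀ i, 0 < d i) (hw : ∀ i, 0 ≤ w i) (hw1 : ∑ i, w i = 1) {α : ℝ}
    (hα : ∑ i, w i * d i < α) : ∑ i, w i * f (d i) ≤ f α := by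
  have hD : (diagonal (RCLike.ofReal ∘ d : Fin n → ℂ)).PosDef :=
    posDef_diagonal_iff.mpr fun i => by simpa using hd i
  set v : Fin n → ℂ := fun i => (√(w i) : ℝ)
  have hquad (e : Fin n → ℝ) :
      star v ⬝ᵥ (diagonal (RCLike.ofReal ∘ e : Fin n → ℂ) *ᵥ v) = ((∑ i, w i * e i : ℝ) : ℂ) := by
    simp only [v, dotProduct, mulVec_diagonal, Pi.star_apply, Complex.star_def,
      Complex.conj_ofReal, Function.comp_apply, Complex.ofReal_sum, Complex.ofReal_mul]
    refine Finset.sum_congr rfl fun i _ => ?_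
    have hsq : ((√(w i) : ℝ) : ℂ) * (√(w i) : ℝ) = w i := by
      exact_mod_cast Real.mul_self_sqrt (hw i)
    linear_combination (e i : ℂ) * hsq
  have hv : star v ⬝ᵥ v = 1 := by simpa [hw1] using hquad 1
  have := hf.re_dotProduct_cfc_le hD hv (α := α) (by rwa [hquad, Complex.ofReal_re])
  rwa [hD.1.cfc_diagonal f, hquad, Complex.ofReal_re] at this

section

open scoped MatrixOrder Matrix.Norms.L2Operator

theorem Matrix.PosDef.cfc_inv_comp_inv {n : Type*} [Fintype n] [DecidableEq n]
    {A : Matrix n n ℂ} (hA : A.PosDef) {f : ℝ → ℝ} (hf : ∀ t, 0 < t → f t ≠ 0) :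
    cfc (fun t => (f t⁻¹)⁻¹) A = (cfc f A⁻¹)⁻¹ := by
  have hApos : IsStrictlyPositive A := isStrictlyPositive_iff_posDef.mpr hA
  have hfin := A.finite_real_spectrum
  have hinv : cfc (Inv.inv : ℝ → ℝ) A = A⁻¹ := by
    rw [nonsing_inv_eq_ringInverse]
    exact cfc_ringInverse_id A hApos.isUnit
  rw [cfc_inv (fun t => f t⁻¹) A (fun t ht => hf _ (inv_pos.mpr (hApos.spectrum_pos ht)))
      (hfin.continuousOn _), ← Function.comp_def f,
    cfc_comp f _ A (hg := (hfin.image _).continuousOn _) (hf := hfin.continuousOn _),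
    hinv, nonsing_inv_eq_ringInverse (cfc f _)]

theorem OperatorMonotoneOn.inv_comp_inv {f : ℝ → ℝ} (hpos : ∀ t, 0 < t → 0 < f t)
    (hf : OperatorMonotoneOn f) : OperatorMonotoneOn (fun t => (f t⁻¹)⁻¹) := by
  intro n A B hA hB hAB
  have hpos_ne (t : ℝ) (ht : 0 < t) : f t ≠ 0 := (hpos t ht).ne'
  have hinv : B⁻¹ ≤ A⁻¹ := by
    simpa only [nonsing_inv_eq_ringInverse] using CStarAlgebra.ringInverse_le_ringInverse
      (Matrix.le_iff.mpr hAB) (isStrictlyPositive_iff_posDef.mpr hA)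
  have hcfc : cfc f B⁻¹ ≤ cfc f A⁻¹ := by
    simpa only [Matrix.le_iff, ← IsHermitian.cfc_eq] using hf n B⁻¹ A⁻¹ hB.inv hA.inv hinv
  have hpos' : IsStrictlyPositive (cfc f B⁻¹) :=
    (cfc_isStrictlyPositive_iff f B⁻¹ (B⁻¹.finite_real_spectrum.continuousOn f)
      hB.inv.1.isSelfAdjoint).mpr fun t ht =>
      hpos t ((isStrictlyPositive_iff_posDef.mpr hB.inv).spectrum_pos ht)
  rw [← Matrix.le_iff, ← hB.1.cfc_eq, ← hA.1.cfc_eq, hA.cfc_inv_comp_inv hpos_ne,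
    hB.cfc_inv_comp_inv hpos_ne, nonsing_inv_eq_ringInverse (cfc f A⁻¹),
    nonsing_inv_eq_ringInverse (cfc f B⁻¹)]
  exact CStarAlgebra.ringInverse_le_ringInverse hcfc hpos'

end

theorem OperatorMonotoneOn.monotoneOn {f : ℝ → ℝ} (hf : OperatorMonotoneOn f) :
    MonotoneOn f (Set.Ioi 0) := by
  intro a ha b _ hab
  rcases hab.eq_or_lt with rfl | hlt
  · rfl
  simpa using hf.sum_mul_le_of_sum_mul_lt (d := ![a]) (w := ![1]) (by simpa using ha) (by simp)
    (by simp) (by simpa using hlt)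

theorem OperatorMonotoneOn.le_one_add_div_two {f : ℝ → ℝ} (hf : OperatorMonotoneOn f)
    (hsymm : ∀ x : ℝ, 0 < x → f x = x * f (1 / x)) (hnorm : f 1 = 1) {x : ℝ} (hx : 0 < x) :
    f x ≤ (1 + x) / 2 := by
  have hle_self : ∀ α, 1 ≤ α → f α ≤ α := by
    intro α hα
    have hα0 : 0 < α := one_pos.trans_le hα
    calc f α = α * f (1 / α) := hsymm α hα0
      _ ≤ α * f 1 := by
        gcongr
        exact hf.monotoneOn (by simpa using hα0) (Set.mem_Ioi.mpr one_pos) ((div_le_one hα0).mpr hα)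
      _ = α := by rw [hnorm, mul_one]
  have hmean : ∀ α, 1 < α → 2 * f x / (1 + x) ≤ α := by
    intro α hα
    have hx1 : 0 < 1 + x := by linarith
    have hJ := hf.sum_mul_le_of_sum_mul_lt (d := ![x, 1 / x]) (w := ![1 / (1 + x), x / (1 + x)])
      (Fin.forall_fin_two.mpr ⟨hx, by simpa using hx⟩)
      (Fin.forall_fin_two.mpr ⟨by simpa using hx1.le, by simpa using (div_pos hx hx1).le⟩)
      (by simp only [Fin.sum_univ_two, cons_val_zero, cons_val_one]; field_simp)
      (α := α) (by simp only [Fin.sum_univ_two, cons_val_zero, cons_val_one]; field_simp; nlinarith)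
    have hfinv : f (1 / x) = f x / x := by rw [hsymm x hx]; field_simp
    simp only [Fin.sum_univ_two, cons_val_zero, cons_val_one, hfinv] at hJ
    calc 2 * f x / (1 + x) = 1 / (1 + x) * f x + x / (1 + x) * (f x / x) := by field_simp; ring
      _ ≤ f α := hJ
      _ ≤ α := hle_self α hα.le
  have := le_of_forall_gt_imp_ge_of_dense hmean
  rw [div_le_one (by linarith)] at this
  linarith

theorem OperatorMonotoneOn.two_mul_div_le {f : ℝ → ℝ} (hf : OperatorMonotoneOn f)
    (hpos : ∀ t, 0 < t → 0 < f t) (hsymm : ∀ x : ℝ, 0 < x → f x = x * f (1 / x))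
    (hnorm : f 1 = 1) {x : ℝ} (hx : 0 < x) : 2 * x / (1 + x) ≤ f x := by
  have hsymm_dual (t : ℝ) (ht : 0 < t) : (f t⁻¹)⁻¹ = t * (f (1 / t)⁻¹)⁻¹ := by
    rw [one_div, inv_inv, hsymm t ht, one_div, mul_inv, ← mul_assoc, mul_inv_cancel₀ ht.ne',
      one_mul]
  have hdual := (hf.inv_comp_inv hpos).le_one_add_div_two hsymm_dual (by simp [hnorm])
    (inv_pos.mpr hx)
  rw [inv_inv, inv_le_iff_one_le_mul₀ (hpos x hx)] at hdual
  rw [div_le_iff₀ (by linarith)]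
  calc 2 * x = 2 * x * 1 := (mul_one _).symm
    _ ≤ 2 * x * ((1 + x⁻¹) / 2 * f x) := by gcongr
    _ = f x * (1 + x) := by field_simp; ring

/-- every normalized symmetric operator monotone function `f` on `(0,∞)` lies
between the harmonic and the arithmetic means: `2x/(1+x) ≤ f(x) ≤ (1+x)/2` for `x > 0`. -/
theorem operatorMonotone_between_harmonic_arithmetic
    (f : ℝ → ℝ) (hfpos : ∀ x : ℝ, 0 < x → 0 < f x)
    (hmono : OperatorMonotoneOn f)
    (hsymm : ∀ x : ℝ, 0 < x → f x = x * f (1 / x))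
    (hnorm : f 1 = 1) :
    ∀ x : ℝ, 0 < x → 2 * x / (1 + x) ≤ f x ∧ f x ≤ (1 + x) / 2 := fun _ hx =>
  ⟨hmono.two_mul_div_le hfpos hsymm hnorm hx, hmono.le_one_add_div_two hsymm hnorm hx⟩
end
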